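/- arXiv:1007.3302 — 4 statements merged into one kernel-verified Lean document; each statement's English description precedes it below -/
import Mathlib

section
/- Let 0 < k < π/T and define Ĝ(x) = (sin(kx) + sin(k(T−x)))/(2k(1−cos(kT))) for x ∈ [0,T]. Then for all x ∈ [0,T], 0 < sin(kT)/(2k(1−cos(kT))) ≤ Ĝ(x) ≤ 1/(2k sin(kT/2)). -/
open Real Set

theorem stmt_1 (T k : ℝ) (hT : 0 < T) (hk : 0 < k) (hkT : k < π / T)
    (G : ℝ → ℝ)
    (hG : ∀ x, G x = (Real.sin (k * x) + Real.sin (k * (T - x))) / (2 * k * (1 - Real.cos (k * T)))) :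
    ∀ x ∈ Set.Icc (0 : ℝ) T,
      0 < Real.sin (k * T) / (2 * k * (1 - Real.cos (k * T))) ∧
      Real.sin (k * T) / (2 * k * (1 - Real.cos (k * T))) ≤ G x ∧
      G x ≤ 1 / (2 * k * Real.sin (k * T / 2)) := by
  intro x hx
  obtain ⟨hx0, hxT⟩ := hx
  have hπ : k * T < π := by
    rw [lt_div_iff₀ hT] at hkT; linarith
  have hkT0 : 0 < k * T := mul_pos hk hT
  have hs : 0 < Real.sin (k * T / 2) :=
    Real.sin_pos_of_pos_of_lt_pi (by linarith) (by linarith [Real.pi_pos])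
  have hsinT : 0 < Real.sin (k * T) := Real.sin_pos_of_pos_of_lt_pi hkT0 hπ
  have hcos2 : Real.cos (k * T) = 1 - 2 * Real.sin (k * T / 2) ^ 2 := by
    have h := Real.cos_two_mul (k * T / 2)
    have h' := Real.sin_sq_add_cos_sq (k * T / 2)
    rw [show 2 * (k * T / 2) = k * T by ring] at h
    linarith
  have hden : 0 < 1 - Real.cos (k * T) := by nlinarith
  have hD : 0 < 2 * k * (1 - Real.cos (k * T)) := by positivity
  have habs : |k * x - k * T / 2| ≤ k * T / 2 := by
    rw [abs_le]
    constructor <;> nlinarith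
  have hcosge : Real.cos (k * T / 2) ≤ Real.cos (k * x - k * T / 2) := by
    rw [← Real.cos_abs (k * x - k * T / 2)]
    exact Real.cos_le_cos_of_nonneg_of_le_pi (abs_nonneg _) (by linarith [Real.pi_pos]) habs
  have hcosle : Real.cos (k * x - k * T / 2) ≤ 1 := Real.cos_le_one _
  have hsin2 : Real.sin (k * T) = 2 * Real.sin (k * T / 2) * Real.cos (k * T / 2) := by
    rw [show k * T = 2 * (k * T / 2) by ring, Real.sin_two_mul]
    ring_nf
  have hsum : Real.sin (k * x) + Real.sin (k * (T - x)) =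
      2 * Real.sin (k * T / 2) * Real.cos (k * x - k * T / 2) := by
    rw [show k * (T - x) = k * T - k * x by ring, Real.sin_sub,
        show k * x - k * T / 2 = k * x - k * T / 2 by ring, Real.cos_sub,
        hsin2, hcos2]
    ring
  refine ⟨div_pos hsinT hD, ?_, ?_⟩
  · rw [hG]
    apply (div_le_div_iff_of_pos_right hD).mpr
    rw [hsum, hsin2]
    nlinarith [hs, hcosge]
  · rw [hG, hsum, div_le_div_iff₀ hD (by positivity : (0:ℝ) < 2 * k * Real.sin (k * T / 2))]
    rw [hcos2]
    nlinarith [mul_pos (mul_pos hk hs) hs, hcosle]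
end

section
/- Let 0 < k < π/T and define G(t,s) on [0,T]×[0,T] by G(t,s) = (sin(k(t−s)) + sin(k(T−t+s)))/(2k(1−cos(kT))) for s ≤ t, and G(t,s) = (sin(k(s−t)) + sin(k(T−s+t)))/(2k(1−cos(kT))) for t ≤ s. Then G(t,s) > 0 for all (t,s) ∈ [0,T]×[0,T]. -/
open Real Set

lemma num_pos (c u : ℝ) (hc0 : 0 < c) (hcπ : c < π) (hu0 : 0 ≤ u) (huc : u ≤ c) :
    0 < Real.sin u + Real.sin (c - u) := by
  have h1 := Real.sin_add (c/2) (u - c/2)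
  have h2 := Real.sin_sub (c/2) (u - c/2)
  have e1 : c/2 + (u - c/2) = u := by ring
  have e2 : c/2 - (u - c/2) = c - u := by ring
  rw [e1] at h1
  rw [e2] at h2
  have hs : 0 < Real.sin (c/2) := Real.sin_pos_of_pos_of_lt_pi (by linarith) (by linarith)
  have hc : 0 < Real.cos (u - c/2) := by
    apply Real.cos_pos_of_mem_Ioo
    simp only [Set.mem_Ioo]; constructor <;> linarith
  nlinarith

theorem stmt_2 (T k : ℝ) (hT : 0 < T) (hk : 0 < k) (hkT : k < π / T)
    (G : ℝ → ℝ → ℝ)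
    (hG1 : ∀ t s : ℝ, s ≤ t →
      G t s = (Real.sin (k * (t - s)) + Real.sin (k * (T - t + s))) / (2 * k * (1 - Real.cos (k * T))))
    (hG2 : ∀ t s : ℝ, t ≤ s →
      G t s = (Real.sin (k * (s - t)) + Real.sin (k * (T - s + t))) / (2 * k * (1 - Real.cos (k * T)))) :
    ∀ t ∈ Set.Icc (0 : ℝ) T, ∀ s ∈ Set.Icc (0 : ℝ) T, 0 < G t s := by
  have hc0 : 0 < k * T := by positivity
  have hcπ : k * T < π := by
    rw [lt_div_iff₀ hT] at hkT; linarith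
  have hden : 0 < 2 * k * (1 - Real.cos (k * T)) := by
    have : Real.cos (k * T) < 1 := by
      have := Real.cos_lt_cos_of_nonneg_of_le_pi (le_refl 0) (le_of_lt hcπ) hc0
      simpa using this
    have h1 : 0 < 1 - Real.cos (k * T) := by linarith
    positivity
  intro t ht s hs
  rcases le_total s t with h | h
  · rw [hG1 t s h]
    apply div_pos _ hden
    have := num_pos (k * T) (k * (t - s)) hc0 hcπ (by nlinarith [ht.1, ht.2, hs.1, hs.2]) (by nlinarith [ht.1, ht.2, hs.1, hs.2])
    have heq : k * T - k * (t - s) = k * (T - t + s) := by ring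
    rwa [heq] at this
  · rw [hG2 t s h]
    apply div_pos _ hden
    have := num_pos (k * T) (k * (s - t)) hc0 hcπ (by nlinarith [ht.1, ht.2, hs.1, hs.2]) (by nlinarith [ht.1, ht.2, hs.1, hs.2])
    have heq : k * T - k * (s - t) = k * (T - s + t) := by ring
    rwa [heq] at this
end

section
/- Let f : ℝ₊ⁿ \ {0} → ℝ be continuous with f(x) > 0 for |x| > 0, and suppose lim_{|x|→∞} f(x)/|x| = b where b ∈ ℝ. Define f̂(θ) = max{ f(u) : u ∈ ℝ₊ⁿ, 1 ≤ |u| ≤ θ }. Then lim_{θ→∞} f̂(θ)/θ = b. -/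
open Filter Topology

/-!
Along a ray `θ ↦ (θ / |v|) • v` inside the orthant, `f/|·|` tends to `b`, and `f > 0` forces
`b ≥ 0`; since `f̂ θ` dominates `f` at the point of norm `θ` on the ray, this gives the lower bound. For the upper bound, the maximiser `u` of
`f̂ θ` either has `|u| ≤ R`, where `f u` is bounded by the constant `f̂ R`, or `|u| > R`, where
`f u < c |u| ≤ c θ` for any `c > b ≥ 0`.
-/

section RunningMax

variable {α : Type*} {S : Set α} {N f : α → ℝ} {b : ℝ}

theorem tendsto_div_of_norm_eq
    (hlim : ∀ ε : ℝ, 0 < ε → ∃ R : ℝ, ∀ x, x ∈ S → R < N x → |f x / N x - b| < ε)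
    {x : ℝ → α} (hx : ∀ᶠ θ in atTop, x θ ∈ S ∧ N (x θ) = θ) :
    Tendsto (fun θ => f (x θ) / θ) atTop (𝓝 b) := by
  rw [Metric.tendsto_nhds]
  intro ε hε
  obtain ⟨R, hR⟩ := hlim ε hε
  filter_upwards [hx, eventually_gt_atTop R] with θ ⟨hxS, hxN⟩ hθ
  have h := hR _ hxS (by rwa [hxN])
  rwa [hxN, ← Real.dist_eq] at h

theorem eventually_lt_div_of_isGreatest
    {fhat : ℝ → ℝ}
    (hfhat : ∀ θ : ℝ, 1 ≤ θ →
      IsGreatest {y | ∃ u, u ∈ S ∧ 1 ≤ N u ∧ N u ≤ θ ∧ f u = y} (fhat θ))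
    {x : ℝ → α} (hx : ∀ᶠ θ in atTop, x θ ∈ S ∧ N (x θ) = θ)
    (hxlim : Tendsto (fun θ => f (x θ) / θ) atTop (𝓝 b)) {a : ℝ} (ha : a < b) :
    ∀ᶠ θ in atTop, a < fhat θ / θ := by
  filter_upwards [hxlim.eventually (lt_mem_nhds ha), hx, eventually_ge_atTop 1]
    with θ hlt ⟨hxS, hxN⟩ hθ
  have hle : f (x θ) ≤ fhat θ := (hfhat θ hθ).2 ⟨x θ, hxS, by rwa [hxN], hxN.le, rfl⟩
  exact hlt.trans_le (div_le_div_of_nonneg_right hle (by linarith))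

theorem eventually_div_lt_of_isGreatest (hb : 0 ≤ b)
    (hlim : ∀ ε : ℝ, 0 < ε → ∃ R : ℝ, ∀ x, x ∈ S → R < N x → |f x / N x - b| < ε)
    {fhat : ℝ → ℝ}
    (hfhat : ∀ θ : ℝ, 1 ≤ θ →
      IsGreatest {y | ∃ u, u ∈ S ∧ 1 ≤ N u ∧ N u ≤ θ ∧ f u = y} (fhat θ))
    {c : ℝ} (hc : b < c) :
    ∀ᶠ θ in atTop, fhat θ / θ < c := by
  obtain ⟨R, hR⟩ := hlim (c - b) (sub_pos.2 hc)
  have hc0 : 0 < c := hb.trans_lt hc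
  set R' := max R 1
  have hR'1 : 1 ≤ R' := le_max_right R 1
  filter_upwards [eventually_gt_atTop R', eventually_gt_atTop (fhat R' / c)] with θ hθR hθM
  obtain ⟨⟨u, hu, hu1, huθ, hfu⟩, -⟩ := hfhat θ (by linarith)
  rw [← hfu, div_lt_iff₀ (by linarith)]
  rcases le_or_gt (N u) R' with huR | huR
  · calc f u ≤ fhat R' := (hfhat R' hR'1).2 ⟨u, hu, hu1, huR, rfl⟩
      _ < c * θ := (div_lt_iff₀' hc0).1 hθM
  · have hNu : 0 < N u := by linarith
    have hdiv : f u / N u < c := by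
      linarith [(abs_sub_lt_iff.1 (hR u hu ((le_max_left R 1).trans_lt huR))).1]
    calc f u < c * N u := (div_lt_iff₀ hNu).1 hdiv
      _ ≤ c * θ := mul_le_mul_of_nonneg_left huθ hc0.le

end RunningMax

theorem sum_abs_smul_div_sum_abs {n : ℕ} (u : Fin n → ℝ) (hu : 0 < ∑ i, |u i|) {θ : ℝ}
    (hθ : 0 ≤ θ) : ∑ i, |((θ / ∑ j, |u j|) • u) i| = θ := by
  simp only [Pi.smul_apply, smul_eq_mul, abs_mul, ← Finset.mul_sum,
    abs_of_nonneg (div_nonneg hθ hu.le)]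
  field_simp

theorem stmt_9_general (n : ℕ) (f : (Fin n → ℝ) → ℝ) (b : ℝ)
    (hfp : ∀ x : Fin n → ℝ, (∀ i, 0 ≤ x i) → 0 < ∑ i, |x i| → 0 < f x)
    (hlim : ∀ ε : ℝ, 0 < ε → ∃ R : ℝ, ∀ x : Fin n → ℝ, (∀ i, 0 ≤ x i) → R < ∑ i, |x i| →
      |f x / (∑ i, |x i|) - b| < ε)
    (fhat : ℝ → ℝ)
    (hfhat : ∀ θ : ℝ, 1 ≤ θ →
      IsGreatest {y | ∃ u : Fin n → ℝ, (∀ i, 0 ≤ u i) ∧ 1 ≤ ∑ i, |u i| ∧ ∑ i, |u i| ≤ θ ∧ f u = y}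
        (fhat θ)) :
    Tendsto (fun θ => fhat θ / θ) atTop (nhds b) := by
  obtain ⟨⟨v, hv, hv1, -, -⟩, -⟩ := hfhat 1 le_rfl
  have hvpos : 0 < ∑ i, |v i| := one_pos.trans_le hv1
  have hray : ∀ᶠ θ in atTop, (∀ i, 0 ≤ ((θ / ∑ j, |v j|) • v) i) ∧
      ∑ i, |((θ / ∑ j, |v j|) • v) i| = θ := by
    filter_upwards [eventually_ge_atTop 0] with θ hθ
    exact ⟨fun i => mul_nonneg (div_nonneg hθ hvpos.le) (hv i),
      sum_abs_smul_div_sum_abs v hvpos hθ⟩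
  have hray_lim := tendsto_div_of_norm_eq
    (S := {x : Fin n → ℝ | ∀ i, 0 ≤ x i}) (N := fun x => ∑ i, |x i|) hlim hray
  have hb : 0 ≤ b := by
    refine ge_of_tendsto hray_lim ?_
    filter_upwards [hray, eventually_gt_atTop 0] with θ ⟨hS, hN⟩ hθ
    exact (div_pos (hfp _ hS (by rwa [hN])) hθ).le
  exact tendsto_order.2 ⟨fun a ha => eventually_lt_div_of_isGreatest hfhat hray hray_lim ha,
    fun c hc => eventually_div_lt_of_isGreatest hb hlim hfhat hc⟩

theorem stmt_9 (n : ℕ) (f : (Fin n → ℝ) → ℝ) (b : ℝ)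
    (hfc : ContinuousOn f {x | (∀ i, 0 ≤ x i) ∧ x ≠ 0})
    (hfp : ∀ x : Fin n → ℝ, (∀ i, 0 ≤ x i) → 0 < ∑ i, |x i| → 0 < f x)
    (hlim : ∀ ε : ℝ, 0 < ε → ∃ R : ℝ, ∀ x : Fin n → ℝ, (∀ i, 0 ≤ x i) → R < ∑ i, |x i| →
      |f x / (∑ i, |x i|) - b| < ε)
    (fhat : ℝ → ℝ)
    (hfhat : ∀ θ : ℝ, 1 ≤ θ →
      IsGreatest {y | ∃ u : Fin n → ℝ, (∀ i, 0 ≤ u i) ∧ 1 ≤ ∑ i, |u i| ∧ ∑ i, |u i| ≤ θ ∧ f u = y}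
        (fhat θ)) :
    Tendsto (fun θ => fhat θ / θ) atTop (nhds b) :=
  stmt_9_general n f b hfp hlim fhat hfhat
end

section
/- For i = 1,…,n let Gᵢ : [0,T]×[0,T] → ℝ be continuous with mᵢ = min Gᵢ > 0, Mᵢ = max Gᵢ, σᵢ = mᵢ/Mᵢ, σ = minᵢ σᵢ. Let hᵢ : [0,T] → ℝ be continuous and nonnegative, and define yᵢ(t) = ∫₀ᵀ Gᵢ(t,s) hᵢ(s) ds. Then min_{t∈[0,T]} Σᵢ yᵢ(t) ≥ σ · Σᵢ max_{t∈[0,T]} yᵢ(t). -/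
open Set intervalIntegral

theorem stmt_12 (T : ℝ) (hT : 0 < T) (n : ℕ) (hn : 0 < n)
    (G : Fin n → ℝ → ℝ → ℝ) (m M : Fin n → ℝ) (σ : ℝ)
    (hGc : ∀ i, ContinuousOn (fun p : ℝ × ℝ => G i p.1 p.2) (Set.Icc 0 T ×ˢ Set.Icc 0 T))
    (hm : ∀ i, IsLeast (Set.image2 (G i) (Set.Icc 0 T) (Set.Icc 0 T)) (m i))
    (hM : ∀ i, IsGreatest (Set.image2 (G i) (Set.Icc 0 T) (Set.Icc 0 T)) (M i))
    (hm0 : ∀ i, 0 < m i)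
    (hσ : IsLeast (Set.range fun i => m i / M i) σ)
    (h : Fin n → ℝ → ℝ)
    (hhc : ∀ i, ContinuousOn (h i) (Set.Icc 0 T))
    (hh0 : ∀ i, ∀ t ∈ Set.Icc (0 : ℝ) T, 0 ≤ h i t)
    (y : Fin n → ℝ → ℝ)
    (hy : ∀ i, ∀ t, y i t = ∫ s in (0 : ℝ)..T, G i t s * h i s) :
    ∀ t ∈ Set.Icc (0 : ℝ) T,
      σ * ∑ i : Fin n, (⨆ t' : Set.Icc (0 : ℝ) T, y i t') ≤ ∑ i : Fin n, y i t := by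
  intro t ht
  have hT0 : (0:ℝ) ≤ T := hT.le
  have huIcc : Set.uIcc (0:ℝ) T = Set.Icc 0 T := uIcc_of_le hT0
  have hM0 : ∀ i, 0 < M i := fun i => (hm0 i).trans_le ((hm i).2 (hM i).1)
  obtain ⟨j, hj⟩ := hσ.1
  have hσpos : 0 < σ := hj ▸ div_pos (hm0 j) (hM0 j)
  have hne : Nonempty (Set.Icc (0:ℝ) T) := ⟨⟨0, left_mem_Icc.mpr hT0⟩⟩
  have hGcont : ∀ i, ∀ t' ∈ Set.Icc (0:ℝ) T,
      ContinuousOn (fun s => G i t' s * h i s) (Set.Icc 0 T) := by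
    intro i t' ht'
    refine ContinuousOn.mul ?_ (hhc i)
    have : ContinuousOn (fun s : ℝ => ((t', s) : ℝ × ℝ)) (Set.Icc 0 T) :=
      (continuous_const.prodMk continuous_id).continuousOn
    exact (hGc i).comp this (fun s hs => ⟨ht', hs⟩)
  have hIntG : ∀ i, ∀ t' ∈ Set.Icc (0:ℝ) T,
      IntervalIntegrable (fun s => G i t' s * h i s) MeasureTheory.volume 0 T := by
    intro i t' ht'
    apply ContinuousOn.intervalIntegrable
    rw [huIcc]; exact hGcont i t' ht'
  have hInth : ∀ i, IntervalIntegrable (h i) MeasureTheory.volume 0 T :=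
    fun i => ContinuousOn.intervalIntegrable (by rw [huIcc]; exact hhc i)
  have key : ∀ i : Fin n, σ * (⨆ t' : Set.Icc (0:ℝ) T, y i t') ≤ y i t := by
    intro i
    set I := ∫ s in (0:ℝ)..T, h i s with hIdef
    have hupper : ∀ t' ∈ Set.Icc (0:ℝ) T, y i t' ≤ M i * I := by
      intro t' ht'
      rw [hy i t', hIdef, ← intervalIntegral.integral_const_mul]
      refine intervalIntegral.integral_mono_on hT0 (hIntG i t' ht')
        ((hInth i).const_mul _) ?_
      intro s hs
      exact mul_le_mul_of_nonneg_right ((hM i).2 (mem_image2_of_mem ht' hs)) (hh0 i s hs)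
    have hlower : m i * I ≤ y i t := by
      rw [hy i t, hIdef, ← intervalIntegral.integral_const_mul]
      refine intervalIntegral.integral_mono_on hT0 ((hInth i).const_mul _)
        (hIntG i t ht) ?_
      intro s hs
      exact mul_le_mul_of_nonneg_right ((hm i).2 (mem_image2_of_mem ht hs)) (hh0 i s hs)
    have hsup : (⨆ t' : Set.Icc (0:ℝ) T, y i t') ≤ M i * I :=
      ciSup_le (fun t' => hupper t' t'.2)
    have hI0 : 0 ≤ I :=
      intervalIntegral.integral_nonneg hT0 (fun s hs => hh0 i s hs)
    have hσM : σ * M i ≤ m i := by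
      have := hσ.2 ⟨i, rfl⟩
      calc σ * M i ≤ (m i / M i) * M i := mul_le_mul_of_nonneg_right this (hM0 i).le
        _ = m i := div_mul_cancel₀ _ (hM0 i).ne'
    calc σ * (⨆ t' : Set.Icc (0:ℝ) T, y i t')
        ≤ σ * (M i * I) := mul_le_mul_of_nonneg_left hsup hσpos.le
      _ = (σ * M i) * I := by ring
      _ ≤ m i * I := mul_le_mul_of_nonneg_right hσM hI0
      _ ≤ y i t := hlower
  calc σ * ∑ i : Fin n, (⨆ t' : Set.Icc (0:ℝ) T, y i t')
      = ∑ i : Fin n, σ * (⨆ t' : Set.Icc (0:ℝ) T, y i t') := Finset.mul_sum _ _ _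
    _ ≤ ∑ i : Fin n, y i t := Finset.sum_le_sum (fun i _ => key i)
end
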